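/- The map from B_{n+1} to B_n which sends a partial permutation (σ,d) to (σ,d) if d ⊆ {1,…,n} and to 0 otherwise is a surjective algebra homomorphism. -/

import Mathlib

/-- Partial permutations `(σ,d)` with `d ⊆ {1,…,n}`. -/
abbrev PPb (n : ℕ) : Type :=
  {p : Equiv.Perm ℕ × Finset ℕ // (∀ x ∉ p.2, p.1 x = x) ∧ p.2 ⊆ Finset.Icc 1 n}

instance (n : ℕ) : Monoid (PPb n) where
  mul p q := ⟨(p.1.1 * q.1.1, p.1.2 ∪ q.1.2), by
    constructor
    · intro x hx
      simp only [Finset.mem_union, not_or] at hx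
      simp [Equiv.Perm.mul_apply, q.2.1 x hx.2, p.2.1 x hx.1]
    · exact Finset.union_subset p.2.2 q.2.2⟩
  one := ⟨(1, ∅), fun x _ => rfl, Finset.empty_subset _⟩
  mul_assoc p q r := Subtype.ext (Prod.ext (mul_assoc _ _ _) (Finset.union_assoc _ _ _))
  one_mul p := Subtype.ext (Prod.ext (one_mul _) (Finset.empty_union _))
  mul_one p := Subtype.ext (Prod.ext (mul_one _) (Finset.union_empty _))

/-- The algebra `B_n` of partial permutations of `{1,…,n}`. -/
abbrev Bb (n : ℕ) : Type := MonoidAlgebra ℚ (PPb n)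

/-!
Restricting to `d ⊆ {1,…,n}` is multiplicative on basis elements, because the support of a
product is the union of the supports: `(σσ', d ∪ d')` survives exactly when both factors do, and
otherwise one of the factors is already `0`. Its linear extension is therefore an algebra
homomorphism, and it is surjective because it is a left inverse of the algebra map
`B_n → B_{n+1}` induced by the inclusion of partial permutations.
-/

namespace PPb

lemma support_mul_subset_iff {n : ℕ} {p q : PPb n} {s : Finset ℕ} :
    (p * q).1.2 ⊆ s ↔ p.1.2 ⊆ s ∧ q.1.2 ⊆ s :=
  Finset.union_subset_iff

def castLE {m n : ℕ} (h : n ≤ m) : PPb n →* PPb m where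
  toFun p := ⟨p.1, p.2.1, p.2.2.trans (Finset.Icc_subset_Icc_right h)⟩
  map_one' := rfl
  map_mul' _ _ := rfl

noncomputable def restrict (m n : ℕ) : PPb m →* Bb n where
  toFun p :=
    if h : p.1.2 ⊆ Finset.Icc 1 n then MonoidAlgebra.of ℚ (PPb n) ⟨p.1, p.2.1, h⟩ else 0
  map_one' := by
    rw [dif_pos (show (1 : PPb m).1.2 ⊆ _ from Finset.empty_subset _)]
    rfl
  map_mul' p q := by
    by_cases hp : p.1.2 ⊆ Finset.Icc 1 n
    · by_cases hq : q.1.2 ⊆ Finset.Icc 1 n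
      · rw [dif_pos hp, dif_pos hq, dif_pos (support_mul_subset_iff.2 ⟨hp, hq⟩), ← map_mul]
        rfl
      · rw [dif_neg hq, mul_zero, dif_neg fun h ↦ hq (support_mul_subset_iff.1 h).2]
    · rw [dif_neg hp, zero_mul, dif_neg fun h ↦ hp (support_mul_subset_iff.1 h).1]

lemma restrict_castLE {m n : ℕ} (h : n ≤ m) (p : PPb n) :
    restrict m n (castLE h p) = MonoidAlgebra.of ℚ (PPb n) p :=
  dif_pos p.2.2

lemma lift_restrict_comp_mapDomain_castLE {m n : ℕ} (h : n ≤ m) :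
    (MonoidAlgebra.lift ℚ (Bb n) (PPb m) (restrict m n)).comp
      (MonoidAlgebra.mapDomainAlgHom ℚ ℚ (castLE h)) = AlgHom.id ℚ (Bb n) := by
  refine MonoidAlgebra.algHom_ext (fun p ↦ ?_) (Subsingleton.elim _ _)
  rw [AlgHom.comp_apply, MonoidAlgebra.mapDomainAlgHom_apply, MonoidAlgebra.mapDomain_single,
    MonoidAlgebra.lift_single, one_smul, restrict_castLE]
  rfl

lemma lift_restrict_surjective {m n : ℕ} (h : n ≤ m) :
    Function.Surjective (MonoidAlgebra.lift ℚ (Bb n) (PPb m) (restrict m n)) :=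
  Function.RightInverse.surjective (AlgHom.congr_fun (lift_restrict_comp_mapDomain_castLE h))

end PPb

/-- the map `B_{n+1} → B_n` sending `(σ,d)` to itself if `d ⊆ {1,…,n}` and to `0`
otherwise is a surjective algebra homomorphism. -/
theorem restriction_surjective_algHom (n : ℕ) :
    ∃ F : Bb (n+1) →ₐ[ℚ] Bb n,
      Function.Surjective F ∧
      ∀ p : PPb (n+1), F (MonoidAlgebra.of ℚ (PPb (n+1)) p)
        = if h : p.1.2 ⊆ Finset.Icc 1 n then
            MonoidAlgebra.of ℚ (PPb n) ⟨p.1, p.2.1, h⟩ else 0 :=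
  ⟨MonoidAlgebra.lift ℚ (Bb n) (PPb (n+1)) (PPb.restrict (n+1) n),
    PPb.lift_restrict_surjective (Nat.le_succ n), MonoidAlgebra.lift_of _⟩
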